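/- arXiv:2012.05634 — 3 statements merged into one kernel-verified Lean document; each statement's English description precedes it below -/
import Mathlib

section
/- Let g(t) = Σ_k a_k t^k be a polynomial with complex coefficients and n a positive integer. Then g(t) is divisible by ([n]_t)^{ℓ+1}, where [n]_t = 1 + t + ... + t^{n-1}, if and only if for every integer r with 0 ≤ r ≤ ℓ, the sums Σ_{k ≡ j mod n} a_k k^r are equal for all residues j = 0, 1, ..., n-1. -/
/-!
The roots of `[n]_t` are the `n`-th roots of unity `ζ ≠ 1`; they are simple and nonzero. With the
Euler operator `θ = t d/dt`, which multiplies `a_k` by `k`, one has `(t - ζ)^(ℓ+1) ∣ g` iff `θ^r g`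
vanishes at `ζ` for all `r ≤ ℓ`, so `[n]_t^(ℓ+1) ∣ g` iff `[n]_t ∣ θ^r g` for all `r ≤ ℓ`.
Finally, `[n]_t` divides `t^n - 1`, so `[n]_t ∣ f` iff it divides the reduction `∑_k a_k t^(k % n)`
of `f`, a polynomial of degree `< n` whose coefficients are the residue sums `∑_{k ≡ j} a_k`; such a
polynomial is divisible by `[n]_t` iff it is a constant multiple of it, i.e. iff those sums agree.
-/

open Polynomial Finset

section ResidueSums

variable {R : Type*} [CommRing R]

lemma coeff_geom_sum_X (n j : ℕ) :
    (∑ i ∈ range n, (X : R[X]) ^ i).coeff j = if j < n then 1 else 0 := by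
  simp only [finsetSum_coeff, coeff_X_pow, sum_ite_eq, mem_range]

lemma geom_sum_X_dvd_iff_coeff_eq {F : R[X]} {n : ℕ} (hF : F.natDegree < n) :
    (∑ i ∈ range n, (X : R[X]) ^ i) ∣ F ↔ ∀ j₁ < n, ∀ j₂ < n, F.coeff j₁ = F.coeff j₂ := by
  nontriviality R
  constructor
  · rintro ⟨q, rfl⟩
    obtain rfl | hq := eq_or_ne q 0
    · simp
    have hdeg := (monic_geom_sum_X (R := R) (n := n) (by omega)).natDegree_mul' hq
    have hP : n - 1 ≤ (∑ i ∈ range n, (X : R[X]) ^ i).natDegree :=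
      le_natDegree_of_ne_zero (by rw [coeff_geom_sum_X, if_pos (by omega)]; exact one_ne_zero)
    rw [eq_C_of_natDegree_eq_zero (show q.natDegree = 0 by omega)]
    intro j₁ hj₁ j₂ hj₂
    simp only [coeff_mul_C, coeff_geom_sum_X, hj₁, hj₂, if_true]
  · intro h
    refine ⟨C (F.coeff 0), ext fun j => ?_⟩
    rw [coeff_mul_C, coeff_geom_sum_X]
    split_ifs with hj
    · rw [one_mul, h j hj 0 (by omega)]
    · rw [zero_mul, coeff_eq_zero_of_natDegree_lt (by omega)]

lemma X_pow_sub_one_dvd_sub_sum_X_pow_mod (f : R[X]) (n : ℕ) {N : ℕ} (hN : f.natDegree < N) :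
    X ^ n - 1 ∣ f - ∑ k ∈ range N, C (f.coeff k) * X ^ (k % n) := by
  nth_rewrite 1 [f.as_sum_range_C_mul_X_pow' hN]
  rw [← sum_sub_distrib]
  refine dvd_sum fun k _ => ?_
  have hk : X ^ k - X ^ (k % n) = X ^ (k % n) * ((X ^ n) ^ (k / n) - 1 : R[X]) := by
    rw [mul_sub, ← pow_mul, ← pow_add, Nat.mod_add_div, mul_one]
  rw [← mul_sub, hk]
  exact dvd_mul_of_dvd_right (dvd_mul_of_dvd_right (sub_one_dvd_pow_sub_one _ _) _) _

theorem geom_sum_X_dvd_iff_residue_sums_eq (f : R[X]) {n N : ℕ} (hn : 0 < n)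
    (hN : f.natDegree < N) :
    (∑ i ∈ range n, (X : R[X]) ^ i) ∣ f ↔ ∀ j₁ < n, ∀ j₂ < n,
      (∑ k ∈ range N, if k % n = j₁ then f.coeff k else 0) =
        ∑ k ∈ range N, if k % n = j₂ then f.coeff k else 0 := by
  set F := ∑ k ∈ range N, C (f.coeff k) * X ^ (k % n)
  have hcoeff (j : ℕ) : F.coeff j = ∑ k ∈ range N, if k % n = j then f.coeff k else 0 := by
    simp only [F, finsetSum_coeff, coeff_C_mul_X_pow, eq_comm (a := j)]
  have hdeg : F.natDegree < n :=
    (natDegree_sum_le_of_forall_le _ _ fun k _ =>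
      (natDegree_C_mul_X_pow_le _ _).trans (Nat.le_pred_of_lt (Nat.mod_lt k hn))).trans_lt
      (Nat.pred_lt hn.ne')
  have hdvd : (∑ i ∈ range n, (X : R[X]) ^ i) ∣ f - F :=
    (Dvd.intro _ (geom_sum_mul X n)).trans (X_pow_sub_one_dvd_sub_sum_X_pow_mod f n hN)
  rw [dvd_iff_dvd_of_dvd_sub hdvd, geom_sum_X_dvd_iff_coeff_eq hdeg]
  simp only [hcoeff]

end ResidueSums

section EulerOperator

variable {R : Type*} [CommSemiring R]

noncomputable def eulerOperator (f : R[X]) : R[X] := X * derivative f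

lemma coeff_eulerOperator (f : R[X]) (k : ℕ) : (eulerOperator f).coeff k = k * f.coeff k := by
  cases k with
  | zero => simp [eulerOperator]
  | succ k => rw [eulerOperator, coeff_X_mul, coeff_derivative, mul_comm]; push_cast; rfl

lemma coeff_iterate_eulerOperator (f : R[X]) (r k : ℕ) :
    (eulerOperator^[r] f).coeff k = (k : R) ^ r * f.coeff k := by
  induction r with
  | zero => simp
  | succ r ih => rw [Function.iterate_succ_apply', coeff_eulerOperator, ih, pow_succ, mul_assoc,
      mul_left_comm]

lemma natDegree_iterate_eulerOperator_le (f : R[X]) (r : ℕ) :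
    (eulerOperator^[r] f).natDegree ≤ f.natDegree :=
  natDegree_le_iff_coeff_eq_zero.2 fun k hk => by
    rw [coeff_iterate_eulerOperator, coeff_eq_zero_of_natDegree_lt hk, mul_zero]

end EulerOperator

section Roots

variable {K : Type*} [Field K]

lemma prod_X_sub_C_pow_dvd_iff (s : Finset K) (m : ℕ) (g : K[X]) :
    (∏ ζ ∈ s, (X - C ζ)) ^ m ∣ g ↔ ∀ ζ ∈ s, (X - C ζ) ^ m ∣ g := by
  rw [← prod_pow]
  refine ⟨fun h ζ hζ => (dvd_prod_of_mem (fun ζ => (X - C ζ) ^ m) hζ).trans h,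
    fun h => prod_dvd_of_coprime ?_ h⟩
  exact fun x _ y _ hxy => (pairwise_coprime_X_sub_C Function.injective_id hxy).pow

lemma prod_X_sub_C_dvd_iff (s : Finset K) (g : K[X]) :
    ∏ ζ ∈ s, (X - C ζ) ∣ g ↔ ∀ ζ ∈ s, g.IsRoot ζ := by
  simpa [dvd_iff_isRoot] using prod_X_sub_C_pow_dvd_iff s 1 g

lemma geom_sum_X_eq_prod_X_sub_C [DecidableEq K] {ω : K} {n : ℕ} (hω : IsPrimitiveRoot ω n)
    (hn : 0 < n) :
    ∑ i ∈ range n, (X : K[X]) ^ i = ∏ ζ ∈ (nthRootsFinset n (1 : K)).erase 1, (X - C ζ) := by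
  refine mul_left_cancel₀ (X_sub_C_ne_zero (1 : K)) ?_
  rw [mul_prod_erase _ (fun ζ => X - C ζ) (one_mem_nthRootsFinset hn),
    ← X_pow_sub_one_eq_prod hn hω, map_one, mul_comm, geom_sum_mul]

variable [CharZero K]

lemma X_sub_C_pow_succ_dvd_iff {ζ : K} (hζ : ζ ≠ 0) (g : K[X]) (m : ℕ) :
    (X - C ζ) ^ (m + 1) ∣ g ↔ g.IsRoot ζ ∧ (X - C ζ) ^ m ∣ eulerOperator g := by
  obtain rfl | hg := eq_or_ne g 0
  · simp [eulerOperator]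
  by_cases hroot : g.IsRoot ζ
  swap
  · simp only [hroot, false_and, iff_false]
    exact fun h => hroot (dvd_iff_isRoot.1 ((dvd_pow_self _ m.succ_ne_zero).trans h))
  have hg' : derivative g ≠ 0 := by
    rw [derivative_ne_zero]
    intro h0
    rw [eq_C_of_natDegree_eq_zero h0, IsRoot, eval_C] at hroot
    exact hg (by rw [eq_C_of_natDegree_eq_zero h0, hroot, C_0])
  have hθ : eulerOperator g ≠ 0 := mul_ne_zero X_ne_zero hg'
  -- `X` does not vanish at `ζ`, and differentiation lowers the multiplicity of the root `ζ` by one.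
  have hmult : (eulerOperator g).rootMultiplicity ζ = g.rootMultiplicity ζ - 1 := by
    rw [eulerOperator, rootMultiplicity_mul hθ, rootMultiplicity_eq_zero (by simpa using hζ),
      derivative_rootMultiplicity_of_root hroot, zero_add]
  have hpos := (rootMultiplicity_pos hg).2 hroot
  rw [← le_rootMultiplicity_iff hg, ← le_rootMultiplicity_iff hθ, hmult]
  simp only [hroot, true_and]
  omega

lemma X_sub_C_pow_succ_dvd_iff_forall_isRoot_iterate {ζ : K} (hζ : ζ ≠ 0) (ℓ : ℕ) (g : K[X]) :
    (X - C ζ) ^ (ℓ + 1) ∣ g ↔ ∀ r ≤ ℓ, (eulerOperator^[r] g).IsRoot ζ := by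
  induction ℓ generalizing g with
  | zero => simp [dvd_iff_isRoot]
  | succ ℓ ih =>
    rw [X_sub_C_pow_succ_dvd_iff hζ, ih]
    constructor
    · rintro ⟨h0, h⟩ (_ | r) hr
      exacts [h0, h r (by omega)]
    · exact fun h => ⟨h 0 (by omega), fun r hr => h (r + 1) (by omega)⟩

theorem geom_sum_X_pow_succ_dvd_iff [DecidableEq K] {ω : K} {n : ℕ} (hω : IsPrimitiveRoot ω n)
    (hn : 0 < n) (ℓ : ℕ) (g : K[X]) :
    (∑ i ∈ range n, (X : K[X]) ^ i) ^ (ℓ + 1) ∣ g ↔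
      ∀ r ≤ ℓ, (∑ i ∈ range n, (X : K[X]) ^ i) ∣ eulerOperator^[r] g := by
  have hζ {ζ : K} (h : ζ ∈ (nthRootsFinset n (1 : K)).erase 1) : ζ ≠ 0 := by
    rintro rfl
    simp [mem_nthRootsFinset hn, zero_pow hn.ne'] at h
  simp_rw [geom_sum_X_eq_prod_X_sub_C hω hn]
  calc _ ↔ ∀ ζ ∈ (nthRootsFinset n (1 : K)).erase 1, ∀ r ≤ ℓ,
          (eulerOperator^[r] g).IsRoot ζ := by
        rw [prod_X_sub_C_pow_dvd_iff]
        exact forall₂_congr fun ζ h => X_sub_C_pow_succ_dvd_iff_forall_isRoot_iterate (hζ h) ℓ g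
    _ ↔ _ := by
        simp_rw [prod_X_sub_C_dvd_iff]
        exact ⟨fun h r hr ζ hζ => h ζ hζ r hr, fun h ζ hζ r hr => h r hr ζ hζ⟩

end Roots

/-- Lemma on cyclotomic-type divisibility via power sums of coefficients:
`g(t)` is divisible by `([n]_t)^(ℓ+1)`, where `[n]_t = 1 + t + ⋯ + t^(n-1)`, iff for every
`r ≤ ℓ` the sums `∑_{k ≡ j mod n} a_k k^r` agree for all residues `j < n`. -/
theorem stmt0 (g : Polynomial ℂ) (n : ℕ) (hn : 0 < n) (ℓ : ℕ) :
    ((∑ i ∈ Finset.range n, (X : Polynomial ℂ) ^ i) ^ (ℓ + 1) ∣ g) ↔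
      ∀ r ≤ ℓ, ∀ j₁ < n, ∀ j₂ < n,
        (∑ k ∈ Finset.range (g.natDegree + 1),
            if k % n = j₁ then g.coeff k * (k : ℂ) ^ r else 0) =
        (∑ k ∈ Finset.range (g.natDegree + 1),
            if k % n = j₂ then g.coeff k * (k : ℂ) ^ r else 0) := by
  rw [geom_sum_X_pow_succ_dvd_iff (Complex.isPrimitiveRoot_exp n hn.ne') hn]
  refine forall₂_congr fun r _ => ?_
  rw [geom_sum_X_dvd_iff_residue_sums_eq _ hn
    (Nat.lt_succ_of_le (natDegree_iterate_eulerOperator_le g r))]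
  simp only [coeff_iterate_eulerOperator, mul_comm]
end

section
/- Let g(S) ∈ ℂ[S] be a polynomial and f(t) ∈ ℂ[t] a polynomial of degree ℓ. Define the action of the shift operator by (S f)(t) = f(t-1), extended linearly so that (Σ_k a_k S^k) f(t) = Σ_k a_k f(t-k). Then g(S) f(t) = 0 (as a polynomial in t) if and only if (1-S)^{ℓ+1} divides g(S). -/
/-!
Factor `g = h · (X - 1)^m` with `m` the multiplicity of the root `1` and `h(1) ≠ 0`, so that
`g(S) f = h(S) ((S - 1)^m f)`. The operator `h(S)` is injective, because it multiplies the
leading coefficient of a polynomial by `h(1)`. In characteristic zero `S - 1` lowers the degree of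
a nonconstant polynomial by exactly one (the coefficient below the top one becomes
`-(deg f) · lc f`) and kills constants, so `(S - 1)^m f = 0` iff `m > deg f`.
-/

open Polynomial

/-- The action of a polynomial `g` in the shift operator `S`, `(S f)(t) = f(t-1)`,
on a polynomial `f`: `(∑ₖ aₖ Sᵏ) f (t) = ∑ₖ aₖ f(t-k)`. -/
noncomputable def shiftAction (g f : Polynomial ℂ) : Polynomial ℂ :=
  g.sum fun k a => Polynomial.C a * f.comp (X - Polynomial.C (k : ℂ))

namespace Polynomial

variable {R : Type*} [CommRing R]

theorem coeff_taylor_natDegree_sub_one (r : R) (f : R[X]) :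
    (taylor r f).coeff (f.natDegree - 1) =
      f.coeff (f.natDegree - 1) + f.natDegree * r * f.leadingCoeff := by
  rcases hd : f.natDegree with _ | n
  · rw [eq_C_of_natDegree_eq_zero hd, taylor_C]
    simp
  · have hlin : (hasseDeriv n f).natDegree < 2 :=
      (natDegree_hasseDeriv_le f n).trans_lt (by omega)
    rw [Nat.add_sub_cancel, taylor_coeff, eval_eq_sum_range' hlin, leadingCoeff, hd]
    simp only [hasseDeriv_coeff, Finset.sum_range_succ, Finset.range_one, Finset.sum_singleton,
      zero_add, Nat.choose_self, Nat.cast_one, one_mul, pow_zero, mul_one, add_comm 1 n,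
      Nat.choose_succ_self_right, Nat.cast_add, pow_one, add_right_inj]
    ring

variable (R) in
/-- The shift `S`, `(S f)(t) = f(t - 1)`. -/
noncomputable def shift : Module.End R R[X] := taylor (-1)

theorem shift_pow_apply (k : ℕ) (f : R[X]) : (shift R ^ k) f = taylor (-(k : R)) f := by
  induction k with
  | zero => simp
  | succ k ih =>
    rw [pow_succ', Module.End.mul_apply, ih, shift, taylor_taylor, Nat.cast_succ, neg_add,
      add_comm]

theorem coeff_shift_sub_one_natDegree_sub_one (f : R[X]) :
    ((shift R - 1) f).coeff (f.natDegree - 1) = -(f.natDegree * f.leadingCoeff) := by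
  simp only [LinearMap.sub_apply, Module.End.one_apply, coeff_sub, shift,
    coeff_taylor_natDegree_sub_one]
  ring

theorem natDegree_shift_sub_one_le (f : R[X]) :
    ((shift R - 1) f).natDegree ≤ f.natDegree - 1 := by
  refine natDegree_le_pred ((natDegree_sub_le _ _).trans ?_) ?_
  · rw [shift, natDegree_taylor, Module.End.one_apply, max_self]
  · rw [LinearMap.sub_apply, Module.End.one_apply, coeff_sub, shift, coeff_taylor_natDegree,
      leadingCoeff, sub_self]

theorem coeff_aeval_shift_natDegree (q f : R[X]) :
    (aeval (shift R) q f).coeff f.natDegree = q.eval 1 * f.leadingCoeff := by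
  induction q using Polynomial.induction_on' with
  | add p q hp hq => simp [hp, hq, add_mul]
  | monomial k a =>
    simp [shift_pow_apply, coeff_taylor_natDegree]

theorem shift_sub_one_apply_C (c : R) : (shift R - 1) (C c) = 0 := by
  rw [LinearMap.sub_apply, Module.End.one_apply, shift, taylor_C, sub_self]

theorem shift_sub_one_pow_apply_eq_zero {m : ℕ} {f : R[X]} (hf : f.natDegree < m) :
    ((shift R - 1) ^ m) f = 0 := by
  induction m generalizing f with
  | zero => exact absurd hf (Nat.not_lt_zero _)
  | succ m ih =>
    rcases m with _ | m
    · rw [zero_add, pow_one, eq_C_of_natDegree_eq_zero (Nat.lt_one_iff.mp hf),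
        shift_sub_one_apply_C]
    · rw [pow_succ, Module.End.mul_apply]
      exact ih ((natDegree_shift_sub_one_le f).trans_lt (by omega))

theorem shift_sub_one_pow_apply_ne_zero [IsDomain R] [CharZero R] {m : ℕ} {f : R[X]}
    (hf : f ≠ 0) (hm : m ≤ f.natDegree) : ((shift R - 1) ^ m) f ≠ 0 := by
  induction m generalizing f with
  | zero => exact hf
  | succ m ih =>
    have hcoeff : ((shift R - 1) f).coeff (f.natDegree - 1) ≠ 0 := by
      rw [coeff_shift_sub_one_natDegree_sub_one, neg_ne_zero]
      exact mul_ne_zero (Nat.cast_ne_zero.mpr (by omega)) (leadingCoeff_ne_zero.mpr hf)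
    rw [pow_succ, Module.End.mul_apply]
    exact ih (fun h => hcoeff (by rw [h, coeff_zero])) ((by omega : m ≤ f.natDegree - 1).trans
      (le_natDegree_of_ne_zero hcoeff))

theorem shift_sub_one_pow_apply_eq_zero_iff [IsDomain R] [CharZero R] {m : ℕ} {f : R[X]}
    (hf : f ≠ 0) : ((shift R - 1) ^ m) f = 0 ↔ f.natDegree < m :=
  ⟨fun h => not_le.mp fun hm => shift_sub_one_pow_apply_ne_zero hf hm h,
    shift_sub_one_pow_apply_eq_zero⟩

theorem aeval_shift_apply_eq_zero_iff [IsDomain R] {q : R[X]} (hq : q.eval 1 ≠ 0) {f : R[X]} :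
    aeval (shift R) q f = 0 ↔ f = 0 := by
  refine ⟨fun h => by_contra fun hf => ?_, by rintro rfl; exact map_zero _⟩
  have := coeff_aeval_shift_natDegree q f
  rw [h, coeff_zero] at this
  exact mul_ne_zero hq (leadingCoeff_ne_zero.mpr hf) this.symm

theorem aeval_X_sub_C_one_shift : aeval (shift R) (X - C 1 : R[X]) = shift R - 1 := by
  rw [map_sub, aeval_X, aeval_C, map_one]

theorem one_sub_X_pow_dvd_iff {n : ℕ} {g : R[X]} : (1 - X) ^ n ∣ g ↔ (X - C 1) ^ n ∣ g := by
  rw [← neg_sub, C_1, neg_pow, (isUnit_neg_one.pow n).mul_left_dvd]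

theorem aeval_shift_apply_eq_zero_iff_dvd [IsDomain R] [CharZero R] (g : R[X]) {f : R[X]}
    (hf : f ≠ 0) : aeval (shift R) g f = 0 ↔ (1 - X) ^ (f.natDegree + 1) ∣ g := by
  rcases eq_or_ne g 0 with rfl | hg
  · simp
  set m := rootMultiplicity 1 g
  set q := g /ₘ (X - C 1) ^ m
  have hfactor : g = q * (X - C 1) ^ m := by
    rw [mul_comm, pow_mul_divByMonic_rootMultiplicity_eq]
  calc aeval (shift R) g f = 0 ↔ aeval (shift R) q (((shift R - 1) ^ m) f) = 0 := by
        rw [hfactor, map_mul, map_pow, aeval_X_sub_C_one_shift, Module.End.mul_apply]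
    _ ↔ ((shift R - 1) ^ m) f = 0 :=
        aeval_shift_apply_eq_zero_iff (eval_divByMonic_pow_rootMultiplicity_ne_zero 1 hg)
    _ ↔ f.natDegree + 1 ≤ m := shift_sub_one_pow_apply_eq_zero_iff hf
    _ ↔ (1 - X) ^ (f.natDegree + 1) ∣ g := by
        rw [le_rootMultiplicity_iff hg, one_sub_X_pow_dvd_iff]

end Polynomial

theorem shiftAction_eq_aeval (g f : ℂ[X]) : shiftAction g f = aeval (shift ℂ) g f := by
  simp [shiftAction, aeval_def, eval₂_eq_sum, Polynomial.sum_def, shift_pow_apply, taylor_apply,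
    smul_eq_C_mul, sub_eq_add_neg]

/-- for `f` of degree `ℓ`, `g(S) f = 0` iff `(1-S)^(ℓ+1)` divides `g(S)`. -/
theorem stmt2 (g f : Polynomial ℂ) (ℓ : ℕ) (hf : f.degree = ℓ) :
    shiftAction g f = 0 ↔ (1 - X : Polynomial ℂ) ^ (ℓ + 1) ∣ g := by
  have hf0 : f ≠ 0 := fun h => by simp [h] at hf
  rw [shiftAction_eq_aeval, aeval_shift_apply_eq_zero_iff_dvd g hf0,
    natDegree_eq_of_degree_eq_some hf]
end

section
/- Let f: ℤ → ℂ be a quasi-polynomial of degree ℓ with period n, let g(t) be a polynomial, let m be an integer, and let c be a positive multiple of n/gcd(m,n). Then ([c]_{S^m})^{ℓ+1} g(S^m) f(t) = ([c]_{S̄^m})^{ℓ+1} g(S̄^m) f̃^{gcd(m,n)}(t), where S is the shift operator (S f)(t) = f(t-1), S̄ is its constituent-wise version, and f̃^k is the cyclic average of f. -/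
open Polynomial Finset

/-!
Write `P = ([c]_X)^(ℓ+1) g`. Both sides are `P(S)` applied to a sequence and read off at `k = 0`,
where `S` is the shift `k ↦ k + 1` on sequences: on the left the sequence is `k ↦ f(t - m k)`, on
the right it is `k ↦ f̃_t(t - m k)`, the constituent of the cyclic average at the residue of `t`.
Their difference is `u k = e_k(t - m k)` with `e_k = f_{t - m k} - f̃_t`, a sequence of polynomials
of degree `≤ ℓ` whose windows of length `q = n / gcd(m,n)` sum to zero: multiplication by `m` and by
`gcd(m,n)` on `ZMod n` differ by a unit, so a window of `k ↦ f_{t - m k}` runs through the same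
constituents as the cyclic average. As `q ∣ c`, applying `[c]_S` keeps `u` of this shape (the
`e_k` get Taylor-shifted) while killing the top coefficient, so `([c]_S)^(ℓ+1) u = 0`.
-/

section Shift

variable (R : Type*) [CommSemiring R]

noncomputable def seqShift : Module.End R (ℕ → R) := LinearMap.funLeft R R (· + 1)

variable {R}

lemma seqShift_pow_apply (i : ℕ) (u : ℕ → R) (k : ℕ) : (seqShift R ^ i) u k = u (k + i) := by
  induction i generalizing u with
  | zero => rfl
  | succ i ih => rw [pow_succ, Module.End.mul_apply, ih]; rfl

lemma aeval_seqShift_apply (p : R[X]) (u : ℕ → R) (k : ℕ) :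
    aeval (seqShift R) p u k = p.sum fun i a => a * u (k + i) := by
  simp only [aeval_def, eval₂_eq_sum, sum_def, LinearMap.coe_sum, Finset.sum_apply,
    Module.End.mul_apply, Module.algebraMap_end_apply, Pi.smul_apply, seqShift_pow_apply,
    smul_eq_mul]

end Shift

section WindowSums

variable {M : Type*} [AddCommMonoid M]

def HasZeroWindowSums (q : ℕ) (v : ℕ → M) : Prop := ∀ k, ∑ r ∈ range q, v (k + r) = 0

lemma HasZeroWindowSums.of_dvd {q c : ℕ} {v : ℕ → M} (hv : HasZeroWindowSums q v)
    (hqc : q ∣ c) : HasZeroWindowSums c v := by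
  obtain ⟨w, rfl⟩ := hqc
  induction w with
  | zero => simp [HasZeroWindowSums]
  | succ w ih =>
    intro k
    rw [mul_add_one, sum_range_add, ih k, zero_add]
    simpa only [add_assoc] using hv (k + q * w)

lemma Function.Periodic.sum_range_mul {v : ℕ → M} {q : ℕ} (hv : Function.Periodic v q) (w : ℕ) :
    ∑ i ∈ range (q * w), v i = w • ∑ i ∈ range q, v i := by
  induction w with
  | zero => simp
  | succ w ih =>
    rw [mul_add_one, sum_range_add, ih, succ_nsmul]
    congr 1
    refine sum_congr rfl fun r _ => ?_
    simpa [add_comm, mul_comm] using hv.nat_mul w r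

end WindowSums

section Vanishing

variable {R : Type*} [CommRing R]

lemma coeff_taylor_of_natDegree_le {p : R[X]} {N : ℕ} (h : p.natDegree ≤ N) (r : R) :
    (taylor r p).coeff N = p.coeff N := by
  have hconst : (hasseDeriv N p).natDegree = 0 :=
    Nat.eq_zero_of_le_zero ((natDegree_hasseDeriv_le p N).trans (Nat.sub_eq_zero_of_le h).le)
  rw [taylor_coeff, eq_C_of_natDegree_eq_zero hconst, eval_C, hasseDeriv_coeff, zero_add,
    Nat.choose_self, Nat.cast_one, one_mul]

lemma HasZeroWindowSums.sum_taylor {q : ℕ} {e : ℕ → R[X]} (he : HasZeroWindowSums q e)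
    (c : ℕ) (r : ℕ → R) :
    HasZeroWindowSums q fun k => ∑ j ∈ range c, taylor (r j) (e (k + j)) := by
  intro k
  rw [sum_comm]
  refine sum_eq_zero fun j _ => ?_
  simp_rw [add_right_comm k _ j]
  rw [← map_sum, he (k + j), map_zero]

lemma degree_sum_taylor_lt {c L : ℕ} {e : ℕ → R[X]} (he : HasZeroWindowSums c e)
    (hdeg : ∀ k, (e k).degree < ↑(L + 1)) (r : ℕ → R) (k : ℕ) :
    (∑ j ∈ range c, taylor (r j) (e (k + j))).degree < L := by
  rw [degree_lt_iff_coeff_zero]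
  intro N hN
  have hcoeff : ∀ j ∈ range c, (taylor (r j) (e (k + j))).coeff N = (e (k + j)).coeff N :=
    fun j _ => coeff_taylor_of_natDegree_le
      ((natDegree_le_of_degree_le (Order.le_of_lt_succ (hdeg _))).trans hN) _
  rw [finsetSum_coeff, sum_congr rfl hcoeff, ← finsetSum_coeff, he k, coeff_zero]

lemma aeval_geomSum_seqShift_eval (e : ℕ → R[X]) (x μ : R) (c : ℕ) :
    aeval (seqShift R) (∑ i ∈ range c, (X : R[X]) ^ i) (fun k => (e k).eval (x - μ * k)) =
      fun k => (∑ j ∈ range c, taylor (-(j * μ)) (e (k + j))).eval (x - μ * k) := by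
  funext k
  simp only [map_sum, map_pow, aeval_X, LinearMap.coe_sum, Finset.sum_apply, seqShift_pow_apply,
    eval_finsetSum, taylor_eval]
  refine sum_congr rfl fun j _ => ?_
  congr 1
  push_cast
  ring

theorem aeval_geomSum_pow_seqShift_eq_zero {q c : ℕ} (hqc : q ∣ c) (x μ : R) (L : ℕ)
    (e : ℕ → R[X]) (he : HasZeroWindowSums q e) (hdeg : ∀ k, (e k).degree < L) :
    aeval (seqShift R) ((∑ i ∈ range c, (X : R[X]) ^ i) ^ L)
      (fun k => (e k).eval (x - μ * k)) = 0 := by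
  induction L generalizing e with
  | zero =>
    have he0 : ∀ k, e k = 0 := fun k => degree_eq_bot.mp (WithBot.lt_coe_bot.mp (hdeg k))
    simp only [he0, eval_zero, pow_zero, map_one]
    rfl
  | succ L ih =>
    rw [pow_succ, map_mul, Module.End.mul_apply, aeval_geomSum_seqShift_eval]
    exact ih _ (he.sum_taylor c _) (degree_sum_taylor_lt (he.of_dvd hqc) hdeg _)

end Vanishing

section Residues

lemma ZMod.exists_unit_mul_gcd (n : ℕ) (m : ℤ) :
    ∃ u : (ZMod n)ˣ, (m : ZMod n) = u * (Int.gcd m n : ℕ) := by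
  obtain ⟨d, hdn, u, hu, hm⟩ := ZMod.eq_unit_mul_divisor (m : ZMod n)
  refine ⟨hu.unit, ?_⟩
  suffices d = Int.gcd m n by rw [hm, IsUnit.unit_spec, this]
  have hdm : (d : ℤ) ∣ m := by
    have := congrArg (ZMod.castHom hdn (ZMod d)) hm
    rwa [map_intCast, map_mul, map_natCast, ZMod.natCast_self, mul_zero,
      ZMod.intCast_zmod_eq_zero_iff_dvd] at this
  have hgd : Int.gcd m n ∣ d := by
    have hg : Int.gcd m n ∣ n := Int.natCast_dvd_natCast.mp (Int.gcd_dvd_right m n)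
    have := congrArg (ZMod.castHom hg (ZMod (Int.gcd m n)))
      (hu.unit.inv_mul_eq_iff_eq_mul.mpr (hu.unit_spec ▸ hm))
    rwa [map_mul, map_intCast, (ZMod.intCast_zmod_eq_zero_iff_dvd _ _).mpr (Int.gcd_dvd_left m n),
      mul_zero, map_natCast, eq_comm, ZMod.natCast_eq_zero_iff] at this
  exact Nat.dvd_antisymm (Int.dvd_gcd hdm (by exact_mod_cast hdn)) hgd

variable {M : Type*} [AddCommMonoid M]

lemma ZMod.sum_range_natCast (n : ℕ) [NeZero n] (F : ZMod n → M) :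
    ∑ i ∈ range n, F i = ∑ x, F x := by
  obtain ⟨k, rfl⟩ := Nat.exists_eq_add_one_of_ne_zero (NeZero.ne n)
  rw [← Fin.sum_univ_eq_sum_range]
  exact sum_congr rfl fun i _ => congrArg F (Fin.cast_val_eq_self i)

lemma ZMod.sum_comp_intCast_mul (n : ℕ) [NeZero n] (F : ZMod n → M) (m : ℤ) :
    ∑ x, F (m * x) = ∑ x, F ((Int.gcd m n : ℕ) * x) := by
  obtain ⟨u, hu⟩ := ZMod.exists_unit_mul_gcd n m
  simp_rw [hu, mul_assoc]
  exact Fintype.sum_equiv (Units.mulLeft u) _ _ fun x => by simp [mul_left_comm]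

end Residues

section CyclicAverage

variable {K : Type*} [Field K]

/-- The constituent at `j` of the cyclic average `f̃^k` of the quasi-polynomial with
constituents `cs`. -/
noncomputable def cyclicAverage (n : ℕ) (cs : ZMod n → K[X]) (k : ℕ) (j : ZMod n) : K[X] :=
  (n : K)⁻¹ • ∑ i ∈ range n, cs (j - i * k)

lemma natDegree_cyclicAverage_le {n ℓ : ℕ} {cs : ZMod n → K[X]} (h : ∀ j, (cs j).natDegree ≤ ℓ)
    (k : ℕ) (j : ZMod n) : (cyclicAverage n cs k j).natDegree ≤ ℓ :=
  (natDegree_smul_le _ _).trans (natDegree_sum_le_of_forall_le _ _ fun _ _ => h _)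

lemma gcd_nsmul_windowSum_eq_sum_range (n : ℕ) [NeZero n] (cs : ZMod n → K[X]) (m t : ℤ)
    (k₀ : ℕ) :
    Int.gcd m n • ∑ r ∈ range (n / Int.gcd m n), cs ((t - m * (k₀ + r : ℕ) : ℤ) : ZMod n) =
      ∑ i ∈ range n, cs (t - i * (Int.gcd m n : ℕ)) := by
  set d := Int.gcd m n
  have hdq : n / d * d = n :=
    Nat.div_mul_cancel (Int.natCast_dvd_natCast.mp (Int.gcd_dvd_right m n))
  have hper :
      Function.Periodic (fun r : ℕ => cs ((t - m * (k₀ + r : ℕ) : ℤ) : ZMod n)) (n / d) := by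
    intro r
    have hmq : ((m * (n / d : ℕ) : ℤ) : ZMod n) = 0 := by
      have hn : (n : ℤ) = (n / d : ℕ) * d := by exact_mod_cast hdq.symm
      rw [ZMod.intCast_zmod_eq_zero_iff_dvd, hn, mul_comm m]
      exact mul_dvd_mul_left _ (Int.gcd_dvd_left m n)
    push_cast at hmq ⊢
    rw [← add_assoc, mul_add, ← sub_sub, hmq, sub_zero]
  calc d • ∑ r ∈ range (n / d), cs ((t - m * (k₀ + r : ℕ) : ℤ) : ZMod n)
      = ∑ i ∈ range n, cs (t - m * (k₀ + (i : ZMod n))) := by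
        rw [← hper.sum_range_mul, hdq]
        push_cast
        rfl
    _ = ∑ x : ZMod n, cs (t - m * x) := by
        rw [ZMod.sum_range_natCast n fun x => cs (t - m * (k₀ + x))]
        exact Fintype.sum_equiv (Equiv.addLeft (k₀ : ZMod n)) _ _ fun x => rfl
    _ = ∑ i ∈ range n, cs (t - i * (d : ℕ)) := by
        rw [ZMod.sum_comp_intCast_mul n (fun y => cs (t - y)), ← ZMod.sum_range_natCast]
        simp_rw [mul_comm]
        rfl

lemma hasZeroWindowSums_sub_cyclicAverage [CharZero K] (n : ℕ) [NeZero n] (cs : ZMod n → K[X])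
    (m t : ℤ) :
    HasZeroWindowSums (n / Int.gcd m n) fun k : ℕ =>
      cs ((t - m * k : ℤ) : ZMod n) - cyclicAverage n cs (Int.gcd m n) t := by
  intro k₀
  have hd : Int.gcd m n ≠ 0 := Int.gcd_ne_zero_right (by exact_mod_cast NeZero.ne n)
  have hdq : (Int.gcd m n : K) * (n / Int.gcd m n : ℕ) * (n : K)⁻¹ = 1 := by
    rw [← Nat.cast_mul, Nat.mul_div_cancel' (Int.natCast_dvd_natCast.mp (Int.gcd_dvd_right m n)),
      mul_inv_cancel₀ (by exact_mod_cast NeZero.ne n)]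
  rw [sum_sub_distrib, sum_const, card_range, sub_eq_zero]
  apply nsmul_right_injective hd
  dsimp only
  rw [gcd_nsmul_windowSum_eq_sum_range, cyclicAverage, ← Nat.cast_smul_eq_nsmul K,
    ← Nat.cast_smul_eq_nsmul K, smul_smul, smul_smul, hdq, one_smul]

end CyclicAverage

theorem stmt19_general (n : ℕ) [NeZero n] (cs : ZMod n → Polynomial ℂ) (ℓ : ℕ)
    (hdeg : (Finset.univ.sup fun j : ZMod n => (cs j).natDegree) = ℓ)
    (g : Polynomial ℂ) (m : ℤ) (c : ℕ)
    (hdvd : (n / Int.gcd m n) ∣ c) :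
    ∀ t : ℤ,
      (((∑ i ∈ Finset.range c, (X : Polynomial ℂ) ^ i) ^ (ℓ + 1) * g).sum fun k a =>
          a * (cs (((t - m * k : ℤ) : ZMod n))).eval ((t - m * k : ℤ) : ℂ)) =
      (((∑ i ∈ Finset.range c, (X : Polynomial ℂ) ^ i) ^ (ℓ + 1) * g).sum fun k a =>
          a * ((n : ℂ)⁻¹ * ∑ i ∈ Finset.range n,
            (cs ((t : ZMod n) - (i : ZMod n) * ((Int.gcd m n : ℕ) : ZMod n))).eval
              ((t - m * k : ℤ) : ℂ))) := by
  intro t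
  set e : ℕ → ℂ[X] := fun k =>
    cs ((t - m * k : ℤ) : ZMod n) - cyclicAverage n cs (Int.gcd m n) t
  have hcs : ∀ j, (cs j).natDegree ≤ ℓ := fun j =>
    hdeg ▸ le_sup (f := fun j => (cs j).natDegree) (mem_univ j)
  have he : ∀ k, (e k).degree < ↑(ℓ + 1) := fun k =>
    (degree_le_of_natDegree_le ((natDegree_sub_le _ _).trans
      (max_le (hcs _) (natDegree_cyclicAverage_le hcs _ _)))).trans_lt
      (WithBot.coe_lt_coe.mpr ℓ.lt_succ_self)
  have hvanish := aeval_geomSum_pow_seqShift_eq_zero hdvd (t : ℂ) (m : ℂ) (ℓ + 1) e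
    (hasZeroWindowSums_sub_cyclicAverage n cs m t) he
  have h := congrFun (congrArg (aeval (seqShift ℂ) g) hvanish) 0
  rw [map_zero, Pi.zero_apply, ← Module.End.mul_apply, ← map_mul, mul_comm,
    aeval_seqShift_apply] at h
  rw [← sub_eq_zero, ← h]
  simp only [sum_def, ← sum_sub_distrib, ← mul_sub]
  refine sum_congr rfl fun k _ => ?_
  simp only [e, cyclicAverage, eval_sub, eval_smul, eval_finsetSum, smul_eq_mul, zero_add]
  push_cast
  rfl

/-- let `f` be a quasi-polynomial of degree `ℓ` with period `n`,
given by constituents `cs j` for `t ≡ j mod n` (so `f(t) = (cs t̄).eval t`), let `g`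
be a polynomial, `m` an integer and `c` a positive multiple of `n / gcd(m,n)`.  Writing
`P(X) = ([c]_X)^(ℓ+1) g(X)`, the shift operator `S` (`(S^s f)(t) = f(t-s)`), its
constituent-wise version `S̄` (`(S̄^s f)(t) = f_{t mod n}(t-s)`), and the cyclic average
`f̃^k` (with constituent `(1/n) ∑_{i<n} cs(j - i·k)` at `j`), we have
`([c]_{S^m})^(ℓ+1) g(S^m) f (t) = ([c]_{S̄^m})^(ℓ+1) g(S̄^m) f̃^{gcd(m,n)} (t)`. -/
theorem stmt19 (n : ℕ) [NeZero n] (cs : ZMod n → Polynomial ℂ) (ℓ : ℕ)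
    (hdeg : (Finset.univ.sup fun j : ZMod n => (cs j).natDegree) = ℓ)
    (g : Polynomial ℂ) (m : ℤ) (c : ℕ) (hc : 0 < c)
    (hdvd : (n / Int.gcd m n) ∣ c) :
    ∀ t : ℤ,
      (((∑ i ∈ Finset.range c, (X : Polynomial ℂ) ^ i) ^ (ℓ + 1) * g).sum fun k a =>
          a * (cs (((t - m * k : ℤ) : ZMod n))).eval ((t - m * k : ℤ) : ℂ)) =
      (((∑ i ∈ Finset.range c, (X : Polynomial ℂ) ^ i) ^ (ℓ + 1) * g).sum fun k a =>
          a * ((n : ℂ)⁻¹ * ∑ i ∈ Finset.range n,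
            (cs ((t : ZMod n) - (i : ZMod n) * ((Int.gcd m n : ℕ) : ZMod n))).eval
              ((t - m * k : ℤ) : ℂ))) :=
  stmt19_general n cs ℓ hdeg g m c hdvd
end
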